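/- (Cubic-error Taylor lower bound along geodesics.) For every σ ∈ M_r, every u ∈ T_σ M_r with Frobenius norm ‖u‖_F = 1, and every real t with 0 ≤ t ≤ 1: f(σ(t)) ≥ f(σ) + t G_σ(u) + (t²/2) H_σ(u) − (5 ‖A‖₁ / 2) t³. -/

import Mathlib

open scoped BigOperators RealInnerProductSpace
open Finset Matrix

noncomputable section

/-- Points on the sphere live in Euclidean space `ℝ^r`. -/
abbrev Pt (r : ℕ) := EuclideanSpace ℝ (Fin r)

/-- A configuration: `n` rows, each a vector in `ℝ^r`. -/
abbrev Conf (n r : ℕ) := Fin n → Pt r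

/-- Membership in the manifold `M_r`: all rows are unit vectors. -/
def inM {n r : ℕ} (σ : Conf n r) : Prop := ∀ i, ‖σ i‖ = 1

/-- `g_i(σ) = ∑_{j ≠ i} A_{ij} σ_j`. -/
def gvec {n r : ℕ} (A : Matrix (Fin n) (Fin n) ℝ) (σ : Conf n r) (i : Fin n) : Pt r :=
  ∑ j ∈ univ.erase i, A i j • σ j

/-- The objective `f(σ) = ⟨A, σσᵀ⟩ = ∑_{i,j} A_{ij} ⟨σ_i, σ_j⟩`. -/
def fval {n r : ℕ} (A : Matrix (Fin n) (Fin n) ℝ) (σ : Conf n r) : ℝ :=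
  ∑ i, ∑ j, A i j * ⟪σ i, σ j⟫

/-- The BCM update `T_i(σ)`: replace row `i` by `g_i(σ)/‖g_i(σ)‖`
    (unchanged if `g_i(σ) = 0`). -/
def Tupd {n r : ℕ} (A : Matrix (Fin n) (Fin n) ℝ) (σ : Conf n r) (i : Fin n) : Conf n r :=
  letI := Classical.dec (gvec A σ i = 0)
  Function.update σ i (if gvec A σ i = 0 then σ i else ‖gvec A σ i‖⁻¹ • gvec A σ i)

/-- `‖A‖₁ = max_j ∑_i |A_{ij}|`. -/
def Anorm1 {n : ℕ} (A : Matrix (Fin n) (Fin n) ℝ) : ℝ := ⨆ j, ∑ i, |A i j|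

/-- `‖A‖_{1,1} = ∑_{i,j} |A_{ij}|`. -/
def Anorm11 {n : ℕ} (A : Matrix (Fin n) (Fin n) ℝ) : ℝ := ∑ i, ∑ j, |A i j|

/-- Squared Riemannian gradient norm
    `‖grad f(σ)‖_F² = 2 ∑_i (‖g_i‖² − ⟨σ_i, g_i⟩²)`. -/
def gradNormSq {n r : ℕ} (A : Matrix (Fin n) (Fin n) ℝ) (σ : Conf n r) : ℝ :=
  2 * ∑ i, (‖gvec A σ i‖ ^ 2 - ⟪σ i, gvec A σ i⟫ ^ 2)

/-- The geodesic through `σ` in direction `u`, at time `t`: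
    `σ_i(t) = σ_i cos(‖u_i‖ t) + (u_i/‖u_i‖) sin(‖u_i‖ t)` (rows with `u_i = 0` stay fixed). -/
def geo {n r : ℕ} (σ u : Conf n r) (t : ℝ) : Conf n r :=
  fun i => Real.cos (‖u i‖ * t) • σ i + (Real.sin (‖u i‖ * t) / ‖u i‖) • u i

/-- Tangency: `u ∈ T_σ M_r` iff every row of `u` is orthogonal to the
    corresponding row of `σ`. -/
def tangent {n r : ℕ} (σ u : Conf n r) : Prop := ∀ i, ⟪u i, σ i⟫ = 0

/-- Squared Frobenius norm `‖u‖_F² = ∑_i ‖u_i‖²`. -/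
def fnormSq {n r : ℕ} (u : Conf n r) : ℝ := ∑ i, ‖u i‖ ^ 2

/-- Riemannian gradient pairing `G_σ(u) = 2 ∑_i ⟨u_i, g_i(σ)⟩`. -/
def Gform {n r : ℕ} (A : Matrix (Fin n) (Fin n) ℝ) (σ u : Conf n r) : ℝ :=
  2 * ∑ i, ⟪u i, gvec A σ i⟫

/-- Riemannian Hessian quadratic form
    `H_σ(u) = 2 ∑_i (⟨u_i, v_i⟩ − ‖u_i‖² ⟨σ_i, g_i(σ)⟩)` with `v_i = ∑_{j≠i} A_{ij} u_j`. -/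
def Hform {n r : ℕ} (A : Matrix (Fin n) (Fin n) ℝ) (σ u : Conf n r) : ℝ :=
  2 * ∑ i, (⟪u i, gvec A u i⟫ - ‖u i‖ ^ 2 * ⟪σ i, gvec A σ i⟫)

/-- Stationary point: `g_i(σ) ≠ 0` and `σ_i = g_i(σ)/‖g_i(σ)‖` for all `i`. -/
def stationary {n r : ℕ} (A : Matrix (Fin n) (Fin n) ℝ) (σ : Conf n r) : Prop :=
  ∀ i, gvec A σ i ≠ 0 ∧ σ i = ‖gvec A σ i‖⁻¹ • gvec A σ i

/-- `w ∈ V_σ = {σB : Bᵀ = −B}` (rows of `σB` given by `(σB)_{ik} = ∑_l σ_{il} B_{lk}`). -/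
def inV {n r : ℕ} (σ w : Conf n r) : Prop :=
  ∃ B : Matrix (Fin r) (Fin r) ℝ, Bᵀ = -B ∧ ∀ i k, w i k = ∑ l, σ i l * B l k

/-- Frobenius-orthogonality of `u` to the subspace `V_σ`. -/
def perpV {n r : ℕ} (σ u : Conf n r) : Prop :=
  ∀ w : Conf n r, inV σ w → ∑ i, ⟪u i, w i⟫ = 0

/-- `f` satisfies quadratic decay at `σ` with constant `μ`:
    `H_σ(u) ≤ −μ ‖u‖_F²` for all tangent `u` Frobenius-orthogonal to `V_σ`. -/
def quadDecay {n r : ℕ} (A : Matrix (Fin n) (Fin n) ℝ) (σ : Conf n r) (μ : ℝ) : Prop :=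
  ∀ u : Conf n r, tangent σ u → perpV σ u → Hform A σ u ≤ -μ * fnormSq u

/-- Geodesic distance `dist(σ, σ') = (∑_i arccos⟨σ_i, σ'_i⟩²)^{1/2}`. -/
def gdist {n r : ℕ} (σ σ' : Conf n r) : ℝ :=
  Real.sqrt (∑ i, Real.arccos ⟪σ i, σ' i⟫ ^ 2)

/-- Right-multiplication of a configuration by a matrix `Q ∈ ℝ^{r×r}` (rowwise). -/
def rowMulQ {n r : ℕ} (σ : Conf n r) (Q : Matrix (Fin r) (Fin r) ℝ) : Conf n r :=
  fun i => (EuclideanSpace.equiv (Fin r) ℝ).symm (fun k => ∑ l, σ i l * Q l k)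

/-- Distance to the equivalence class `[σ'] = {σ'Q : Q ∈ O(r)}`. -/
def distClass {n r : ℕ} (σ σ' : Conf n r) : ℝ :=
  ⨅ Q : {Q : Matrix (Fin r) (Fin r) ℝ // Qᵀ * Q = 1}, gdist σ (rowMulQ σ' Q.1)

/-- `f* = sup_{σ ∈ M_r} f(σ)`. -/
def fstar {n r : ℕ} (A : Matrix (Fin n) (Fin n) ℝ) : ℝ :=
  sSup (fval A '' {σ : Conf n r | inM σ})

/-- The optimal value of the SDP with unit-diagonal constraints. -/
def SDPval {n : ℕ} (A : Matrix (Fin n) (Fin n) ℝ) : ℝ :=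
  sSup {y | ∃ X : Matrix (Fin n) (Fin n) ℝ, X.PosSemidef ∧ (∀ i, X i i = 1) ∧
    y = ∑ i, ∑ j, A i j * X i j}

/-- BCM iterates along a sequence of coordinates `ω`. -/
def iterSeq {n r : ℕ} (A : Matrix (Fin n) (Fin n) ℝ) (σ0 : Conf n r) (ω : ℕ → Fin n) :
    ℕ → Conf n r
  | 0 => σ0
  | k + 1 => Tupd A (iterSeq A σ0 ω k) (ω k)

/-- The set of rows where `u` is nonzero. -/
def suppu {n r : ℕ} (u : Conf n r) : Finset (Fin n) :=
  letI := Classical.decPred (fun i : Fin n => u i ≠ 0)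
  Finset.univ.filter (fun i : Fin n => u i ≠ 0)

/-!
With `a_i = ‖u_i‖`, row `i` of the geodesic is `cos (a_i t) σ_i + (sin (a_i t) / a_i) u_i`.
For a symmetric `A` with zero diagonal, `f + t G + t² H / 2 = ∑ A_ij P_ij(t)`, where `P_ij` is the
second-order Taylor polynomial in `t` of `⟪σ_i(t), σ_j(t)⟫`: the two summands differ by an
antisymmetric kernel. The bounds `|cos x - 1 + x² / 2| ≤ 5 x⁴ / 96` and `|sin x - x| ≤ x³ / 6`
give `|⟪σ_i(t), σ_j(t)⟫ - P_ij(t)| ≤ (5 / 4) (a_i² + a_j²) t³`, and summing against `|A_ij|`,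
whose row and column sums are at most `‖A‖₁`, with `∑ a_i² = 1` yields `(5 / 2) ‖A‖₁ t³`.
-/

open Real

section Trigonometric

variable {a b t : ℝ}

lemma abs_one_sub_cos_le (x : ℝ) : |1 - cos x| ≤ x ^ 2 / 2 := by
  rw [abs_of_nonneg (sub_nonneg.2 (cos_le_one x))]
  linarith [one_sub_sq_div_two_le_cos (x := x)]

lemma abs_cos_mul_sub_le (ha0 : 0 ≤ a) (ha1 : a ≤ 1) (ht0 : 0 ≤ t) (ht1 : t ≤ 1) :
    |cos (a * t) - (1 - a ^ 2 * t ^ 2 / 2)| ≤ 5 / 96 * a ^ 2 * t ^ 3 := by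
  have hat : 0 ≤ a * t := mul_nonneg ha0 ht0
  have h := cos_bound (by rw [abs_of_nonneg hat]; exact mul_le_one₀ ha1 ht0 ht1)
  rw [abs_of_nonneg hat] at h
  have h4 : (a * t) ^ 4 ≤ a ^ 2 * t ^ 3 :=
    calc (a * t) ^ 4 = a ^ 2 * t ^ 3 * (a ^ 2 * t) := by ring
      _ ≤ a ^ 2 * t ^ 3 :=
        mul_le_of_le_one_right (by positivity) (mul_le_one₀ (pow_le_one₀ ha0 ha1) ht0 ht1)
  calc _ = |cos (a * t) - (1 - (a * t) ^ 2 / 2)| := by ring_nf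
    _ ≤ _ := h
    _ ≤ _ := by linarith

lemma abs_sin_mul_div_le (ha0 : 0 ≤ a) (ht0 : 0 ≤ t) : |sin (a * t) / a| ≤ t := by
  rcases ha0.eq_or_lt with rfl | ha
  · simpa using ht0
  rw [abs_div, abs_of_pos ha, div_le_iff₀ ha]
  calc |sin (a * t)| ≤ |a * t| := abs_sin_le_abs
    _ = t * a := by rw [abs_of_nonneg (by positivity), mul_comm]

lemma abs_sin_mul_div_sub_mul_le (ha0 : 0 ≤ a) (ha1 : a ≤ 1) (ht0 : 0 ≤ t) :
    |sin (a * t) / a - t| * a ≤ a ^ 2 * t ^ 3 / 6 := by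
  have hid : (sin (a * t) / a - t) * a = -(a * t - sin (a * t)) := by
    rcases ha0.eq_or_lt with rfl | ha
    · simp
    · field_simp; ring
  rw [← abs_of_nonneg ha0, ← abs_mul, abs_of_nonneg ha0, hid, abs_neg]
  calc _ ≤ |a * t| ^ 3 / 6 := abs_sub_sin_le _
    _ = a * (a ^ 2 * t ^ 3) / 6 := by rw [abs_of_nonneg (by positivity)]; ring
    _ ≤ _ := by linarith [mul_le_of_le_one_left (show 0 ≤ a ^ 2 * t ^ 3 by positivity) ha1]

lemma abs_cos_mul_cos_sub_le (ha0 : 0 ≤ a) (ha1 : a ≤ 1) (hb0 : 0 ≤ b) (hb1 : b ≤ 1)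
    (ht0 : 0 ≤ t) (ht1 : t ≤ 1) :
    |cos (a * t) * cos (b * t) - 1 + t ^ 2 * (a ^ 2 + b ^ 2) / 2|
      ≤ 17 / 96 * (a ^ 2 + b ^ 2) * t ^ 3 := by
  have hprod : |(1 - cos (a * t)) * (1 - cos (b * t))| ≤ (a ^ 2 + b ^ 2) * t ^ 3 / 8 := by
    have ha2 : a ^ 2 * b ^ 2 ≤ a ^ 2 := mul_le_of_le_one_right (sq_nonneg a) (pow_le_one₀ hb0 hb1)
    have hb2 : a ^ 2 * b ^ 2 ≤ b ^ 2 := mul_le_of_le_one_left (sq_nonneg b) (pow_le_one₀ ha0 ha1)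
    rw [abs_mul]
    calc _ ≤ (a * t) ^ 2 / 2 * ((b * t) ^ 2 / 2) :=
          mul_le_mul (abs_one_sub_cos_le _) (abs_one_sub_cos_le _) (abs_nonneg _) (by positivity)
      _ = a ^ 2 * b ^ 2 * t * t ^ 3 / 4 := by ring
      _ ≤ (a ^ 2 + b ^ 2) / 2 * 1 * t ^ 3 / 4 := by gcongr; linarith
      _ = _ := by ring
  calc _ = |(cos (a * t) - (1 - a ^ 2 * t ^ 2 / 2)) + (cos (b * t) - (1 - b ^ 2 * t ^ 2 / 2))
          + (1 - cos (a * t)) * (1 - cos (b * t))| := by ring_nf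
    _ ≤ _ := abs_add_three _ _ _
    _ ≤ _ := by
      linarith [abs_cos_mul_sub_le ha0 ha1 ht0 ht1, abs_cos_mul_sub_le hb0 hb1 ht0 ht1]

lemma abs_cos_mul_sin_div_sub_mul_le (hb0 : 0 ≤ b) (hb1 : b ≤ 1) (ht0 : 0 ≤ t) :
    |cos (a * t) * (sin (b * t) / b) - t| * b ≤ (a ^ 2 / 2 + b ^ 2 / 6) * t ^ 3 := by
  have hsin := abs_sin_mul_div_sub_mul_le hb0 hb1 ht0
  have hcos : |t * (cos (a * t) - 1)| * b ≤ a ^ 2 / 2 * t ^ 3 := by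
    rw [abs_mul, abs_of_nonneg ht0, abs_sub_comm]
    calc _ ≤ t * ((a * t) ^ 2 / 2) * 1 := by
          gcongr
          exact abs_one_sub_cos_le _
      _ = _ := by ring
  calc _ = |cos (a * t) * (sin (b * t) / b - t) + t * (cos (a * t) - 1)| * b := by ring_nf
    _ ≤ (|cos (a * t)| * |sin (b * t) / b - t| + |t * (cos (a * t) - 1)|) * b := by
        rw [← abs_mul]; gcongr; exact abs_add_le _ _
    _ ≤ (1 * |sin (b * t) / b - t| + |t * (cos (a * t) - 1)|) * b := by
        gcongr; exact abs_cos_le_one _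
    _ ≤ _ := by linarith

lemma abs_sin_div_mul_sin_div_sub_mul_le (ha0 : 0 ≤ a) (ha1 : a ≤ 1) (hb0 : 0 ≤ b) (hb1 : b ≤ 1)
    (ht0 : 0 ≤ t) (ht1 : t ≤ 1) :
    |sin (a * t) / a * (sin (b * t) / b) - t ^ 2| * (a * b) ≤ (a ^ 2 + b ^ 2) / 6 * t ^ 3 := by
  have hsa : |sin (a * t) / a| * a ≤ 1 := by
    calc _ ≤ t * 1 := by gcongr; exact abs_sin_mul_div_le ha0 ht0
      _ ≤ 1 := by linarith
  have hsina := abs_sin_mul_div_sub_mul_le ha0 ha1 ht0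
  have hsinb := abs_sin_mul_div_sub_mul_le hb0 hb1 ht0
  calc _ = |sin (a * t) / a * (sin (b * t) / b - t) + t * (sin (a * t) / a - t)| * (a * b) := by
        ring_nf
    _ ≤ (|sin (a * t) / a * (sin (b * t) / b - t)| + |t * (sin (a * t) / a - t)|) * (a * b) := by
        gcongr; exact abs_add_le _ _
    _ = (|sin (a * t) / a| * a) * (|sin (b * t) / b - t| * b)
          + (t * b) * (|sin (a * t) / a - t| * a) := by
        rw [abs_mul, abs_mul, abs_of_nonneg ht0]; ring
    _ ≤ 1 * (b ^ 2 * t ^ 3 / 6) + 1 * (a ^ 2 * t ^ 3 / 6) := by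
        gcongr
        nlinarith
    _ = _ := by ring

end Trigonometric

section Pair

variable {E : Type*} [NormedAddCommGroup E] [InnerProductSpace ℝ E]

/-- The second-order Taylor polynomial in `t` of
`⟪cos (‖v‖ t) x + (sin (‖v‖ t) / ‖v‖) v, cos (‖w‖ t) y + (sin (‖w‖ t) / ‖w‖) w⟫`. -/
def innerGeodesicTaylor (t : ℝ) (x y v w : E) : ℝ :=
  ⟪x, y⟫ + t * (⟪x, w⟫ + ⟪v, y⟫) + t ^ 2 * (⟪v, w⟫ - (‖v‖ ^ 2 + ‖w‖ ^ 2) / 2 * ⟪x, y⟫)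

lemma abs_inner_geodesic_sub_innerGeodesicTaylor_le {x y v w : E} {t : ℝ} (hx : ‖x‖ ≤ 1)
    (hy : ‖y‖ ≤ 1) (hv : ‖v‖ ≤ 1) (hw : ‖w‖ ≤ 1) (ht0 : 0 ≤ t) (ht1 : t ≤ 1) :
    |⟪cos (‖v‖ * t) • x + (sin (‖v‖ * t) / ‖v‖) • v,
        cos (‖w‖ * t) • y + (sin (‖w‖ * t) / ‖w‖) • w⟫ - innerGeodesicTaylor t x y v w|
      ≤ 5 / 4 * (‖v‖ ^ 2 + ‖w‖ ^ 2) * t ^ 3 := by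
  have abs_mul_le {c s b : ℝ} (hs : |s| ≤ b) : |c * s| ≤ |c| * b := by
    rw [abs_mul]; exact mul_le_mul_of_nonneg_left hs (abs_nonneg c)
  have hS : |⟪x, y⟫| ≤ 1 :=
    (abs_real_inner_le_norm x y).trans (mul_le_one₀ hx (norm_nonneg y) hy)
  have hX : |⟪x, w⟫| ≤ ‖w‖ :=
    (abs_real_inner_le_norm x w).trans (mul_le_of_le_one_left (norm_nonneg w) hx)
  have hY : |⟪v, y⟫| ≤ ‖v‖ :=
    (abs_real_inner_le_norm v y).trans (mul_le_of_le_one_right (norm_nonneg v) hy)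
  have hU : |⟪v, w⟫| ≤ ‖v‖ * ‖w‖ := abs_real_inner_le_norm v w
  set a := ‖v‖
  set b := ‖w‖
  have ha0 : 0 ≤ a := norm_nonneg v
  have hb0 : 0 ≤ b := norm_nonneg w
  have hexpand :
      ⟪cos (a * t) • x + (sin (a * t) / a) • v, cos (b * t) • y + (sin (b * t) / b) • w⟫
        - innerGeodesicTaylor t x y v w
      = (cos (a * t) * cos (b * t) - 1 + t ^ 2 * (a ^ 2 + b ^ 2) / 2) * ⟪x, y⟫
        + (cos (a * t) * (sin (b * t) / b) - t) * ⟪x, w⟫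
        + (cos (b * t) * (sin (a * t) / a) - t) * ⟪v, y⟫
        + (sin (a * t) / a * (sin (b * t) / b) - t ^ 2) * ⟪v, w⟫ := by
    simp only [innerGeodesicTaylor, inner_add_left, inner_add_right, real_inner_smul_left,
      real_inner_smul_right]
    ring
  have : 0 ≤ (a ^ 2 + b ^ 2) * t ^ 3 := by positivity
  rw [hexpand]
  refine (abs_add_le _ _).trans ((add_le_add_left (abs_add_three _ _ _) _).trans ?_)
  linarith [abs_mul_le hS (c := cos (a * t) * cos (b * t) - 1 + t ^ 2 * (a ^ 2 + b ^ 2) / 2),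
    abs_mul_le hX (c := cos (a * t) * (sin (b * t) / b) - t),
    abs_mul_le hY (c := cos (b * t) * (sin (a * t) / a) - t),
    abs_mul_le hU (c := sin (a * t) / a * (sin (b * t) / b) - t ^ 2),
    abs_cos_mul_cos_sub_le ha0 hv hb0 hw ht0 ht1,
    abs_cos_mul_sin_div_sub_mul_le (a := a) hb0 hw ht0,
    abs_cos_mul_sin_div_sub_mul_le (a := b) ha0 hv ht0,
    abs_sin_div_mul_sin_div_sub_mul_le ha0 hv hb0 hw ht0 ht1]

end Pair

section Sums

variable {n r : ℕ} {A : Matrix (Fin n) (Fin n) ℝ}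

lemma gvec_eq_sum (hdiag : ∀ i, A i i = 0) (τ : Conf n r) (i : Fin n) :
    gvec A τ i = ∑ j, A i j • τ j :=
  Finset.sum_erase _ (by rw [hdiag i, zero_smul])

lemma inner_gvec (hdiag : ∀ i, A i i = 0) (x : Pt r) (τ : Conf n r) (i : Fin n) :
    ⟪x, gvec A τ i⟫ = ∑ j, A i j * ⟪x, τ j⟫ := by
  simp only [gvec_eq_sum hdiag, inner_sum, real_inner_smul_right]

lemma sum_sum_mul_swap (hA : A.IsSymm) (F : Fin n → Fin n → ℝ) :
    ∑ i, ∑ j, A i j * F j i = ∑ i, ∑ j, A i j * F i j := by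
  rw [Finset.sum_comm]
  simp only [hA.apply]

lemma sum_sum_mul_eq_zero_of_antisymm (hA : A.IsSymm) {F : Fin n → Fin n → ℝ}
    (hF : ∀ i j, F j i = -F i j) : ∑ i, ∑ j, A i j * F i j = 0 := by
  have hneg : ∑ i, ∑ j, A i j * F j i = -∑ i, ∑ j, A i j * F i j := by
    simp only [← sum_neg_distrib, ← mul_neg, ← hF]
  linarith [sum_sum_mul_swap hA F]

lemma fval_add_Gform_add_Hform_eq_sum (hdiag : ∀ i, A i i = 0) (σ u : Conf n r) (t : ℝ) :
    fval A σ + t * Gform A σ u + t ^ 2 / 2 * Hform A σ u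
      = ∑ i, ∑ j, A i j * (⟪σ i, σ j⟫ + 2 * t * ⟪u i, σ j⟫
          + t ^ 2 * (⟪u i, u j⟫ - ‖u i‖ ^ 2 * ⟪σ i, σ j⟫)) := by
  simp only [fval, Gform, Hform, inner_gvec hdiag, mul_sum, ← sum_add_distrib, ← sum_sub_distrib]
  refine sum_congr rfl fun i _ => sum_congr rfl fun j _ => ?_
  ring

lemma fval_add_Gform_add_Hform (hA : A.IsSymm) (hdiag : ∀ i, A i i = 0) (σ u : Conf n r)
    (t : ℝ) :
    fval A σ + t * Gform A σ u + t ^ 2 / 2 * Hform A σ u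
      = ∑ i, ∑ j, A i j * innerGeodesicTaylor t (σ i) (σ j) (u i) (u j) := by
  rw [fval_add_Gform_add_Hform_eq_sum hdiag, ← sub_eq_zero, ← sum_sub_distrib]
  simp only [← sum_sub_distrib, ← mul_sub]
  refine sum_sum_mul_eq_zero_of_antisymm hA fun i j => ?_
  simp only [innerGeodesicTaylor, real_inner_comm (σ i) (σ j), real_inner_comm (u i) (u j),
    real_inner_comm (σ i) (u j), real_inner_comm (u i) (σ j)]
  ring

lemma sum_abs_le_Anorm1 (j : Fin n) : ∑ i, |A i j| ≤ Anorm1 A :=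
  le_ciSup (f := fun j => ∑ i, |A i j|) (Set.finite_range _).bddAbove j

lemma sum_sum_abs_mul_add_le (hA : A.IsSymm) {w : Fin n → ℝ} (hw : ∀ i, 0 ≤ w i) :
    ∑ i, ∑ j, |A i j| * (w i + w j) ≤ 2 * Anorm1 A * ∑ i, w i := by
  have hcol : ∑ i, ∑ j, |A i j| * w j ≤ Anorm1 A * ∑ j, w j := by
    rw [sum_comm, mul_sum]
    simp only [← sum_mul]
    exact sum_le_sum fun j _ => mul_le_mul_of_nonneg_right (sum_abs_le_Anorm1 j) (hw j)
  have hrow : ∑ i, ∑ j, |A i j| * w i = ∑ i, ∑ j, |A i j| * w j := by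
    rw [sum_comm]
    simp only [hA.apply]
  simp only [mul_add, sum_add_distrib, hrow]
  linarith

end Sums

theorem geodesic_taylor_lower_bound_general {n r : ℕ}
    (A : Matrix (Fin n) (Fin n) ℝ) (hA : A.IsSymm) (hdiag : ∀ i, A i i = 0)
    (σ : Conf n r) (hσ : inM σ) (u : Conf n r) (hun : fnormSq u = 1)
    (t : ℝ) (ht0 : 0 ≤ t) (ht1 : t ≤ 1) :
    fval A σ + t * Gform A σ u + t ^ 2 / 2 * Hform A σ u - 5 * Anorm1 A / 2 * t ^ 3
      ≤ fval A (geo σ u t) := by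
  have hu1 (i : Fin n) : ‖u i‖ ≤ 1 := (sq_le_one_iff₀ (norm_nonneg _)).1
    (hun ▸ single_le_sum (fun j _ => sq_nonneg ‖u j‖) (mem_univ i))
  have hpair (i j : Fin n) := abs_inner_geodesic_sub_innerGeodesicTaylor_le (hσ i).le (hσ j).le
    (hu1 i) (hu1 j) ht0 ht1
  have hrem : |fval A (geo σ u t) - (fval A σ + t * Gform A σ u + t ^ 2 / 2 * Hform A σ u)|
      ≤ 5 / 2 * Anorm1 A * t ^ 3 := by
    rw [fval_add_Gform_add_Hform hA hdiag, fval, ← sum_sub_distrib]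
    simp only [← sum_sub_distrib, ← mul_sub]
    calc _ ≤ ∑ i, ∑ j, |A i j| * (5 / 4 * (‖u i‖ ^ 2 + ‖u j‖ ^ 2) * t ^ 3) := by
          refine (abs_sum_le_sum_abs _ _).trans (sum_le_sum fun i _ =>
            (abs_sum_le_sum_abs _ _).trans (sum_le_sum fun j _ => ?_))
          rw [abs_mul]
          exact mul_le_mul_of_nonneg_left (hpair i j) (abs_nonneg _)
      _ = 5 / 4 * t ^ 3 * ∑ i, ∑ j, |A i j| * (‖u i‖ ^ 2 + ‖u j‖ ^ 2) := by
          simp only [mul_sum]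
          exact sum_congr rfl fun i _ => sum_congr rfl fun j _ => by ring
      _ ≤ 5 / 4 * t ^ 3 * (2 * Anorm1 A * fnormSq u) := by
          gcongr
          exact sum_sum_abs_mul_add_le hA fun i => sq_nonneg _
      _ = _ := by rw [hun]; ring
  linarith [neg_abs_le (fval A (geo σ u t)
    - (fval A σ + t * Gform A σ u + t ^ 2 / 2 * Hform A σ u))]

/-- cubic-error Taylor lower bound along geodesics. -/
theorem geodesic_taylor_lower_bound {n r : ℕ} (hn : 0 < n) (hr : 0 < r)
    (A : Matrix (Fin n) (Fin n) ℝ) (hA : A.IsSymm) (hdiag : ∀ i, A i i = 0)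
    (σ : Conf n r) (hσ : inM σ) (u : Conf n r) (hu : tangent σ u) (hun : fnormSq u = 1)
    (t : ℝ) (ht0 : 0 ≤ t) (ht1 : t ≤ 1) :
    fval A σ + t * Gform A σ u + t ^ 2 / 2 * Hform A σ u - 5 * Anorm1 A / 2 * t ^ 3
      ≤ fval A (geo σ u t) :=
  geodesic_taylor_lower_bound_general A hA hdiag σ hσ u hun t ht0 ht1
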